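/- Under the hypotheses of Theorem (main converse), every word of the form b·0^{n-1} with b in A occurs in the sequence S produced by Algorithm P. -/
import Mathlib


namespace DeBruijnPaper

/-- The word (block) of length `n` starting at position `i` of the sequence `a`. -/
def wordAt {t : ℕ} (a : ℕ → Fin t) (n i : ℕ) : Fin n → Fin t :=
  fun j => a (i + (j : ℕ))

/-- `w` has appeared as a block entirely within the first `k` symbols of `a`. -/
def Seen {t : ℕ} (a : ℕ → Fin t) (n k : ℕ) (w : Fin n → Fin t) : Prop :=
  ∃ p, p + n ≤ k ∧ wordAt a n p = w

/-- The candidate `n`-word whose last symbol (at position `k`) is replaced by `c`,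
preceded by the `n-1` symbols `a (k-(n-1)), …, a (k-1)`. -/
def cand {t : ℕ} (a : ℕ → Fin t) (n k : ℕ) (c : Fin t) : Fin n → Fin t :=
  fun j => if (j : ℕ) + 1 = n then c else a (k - (n - 1) + (j : ℕ))

/-- `P` is a preference function of span `m`: to each word of length `m` it assigns a
priority listing of the alphabet, i.e. `P w : Fin t → Fin t` is a bijection,
`P w i` being the `i`-th preferred symbol after the word `w`. -/
def IsPrefFun (t m : ℕ) (P : (Fin m → Fin t) → Fin t → Fin t) : Prop :=
  ∀ w, Function.Bijective (P w)

/-- The sequence `a` (of length `L`) is produced by the greedy Algorithm P for the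
preference function `P` of span `m`, at order `n`, from the initial word `I`:
it starts with `I`, every `n`-word occurs at most once, each appended symbol is the
highest-priority symbol (priorities determined by the last `m` symbols) forming a
new `n`-word, and the sequence is maximal (cannot be extended). -/
structure GenSeqFrom (t m n : ℕ) (I : Fin n → Fin t)
    (P : (Fin m → Fin t) → Fin t → Fin t) (a : ℕ → Fin t) (L : ℕ) : Prop where
  len_ge : n ≤ L
  init : ∀ j : Fin n, a (j : ℕ) = I j
  inj : ∀ i j, i + n ≤ L → j + n ≤ L → wordAt a n i = wordAt a n j → i = j
  greedy : ∀ k, n ≤ k → k < L → ∃ i : Fin t,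
    a k = P (wordAt a m (k - m)) i ∧
    ∀ j : Fin t, j < i → Seen a n k (cand a n k (P (wordAt a m (k - m)) j))
  maximal : ∀ c : Fin t, Seen a n L (cand a n L c)

/-- The sequence `a` of length `L` contains every `n`-word over the alphabet. -/
def Full (t n : ℕ) (a : ℕ → Fin t) (L : ℕ) : Prop :=
  ∀ w : Fin n → Fin t, ∃ p, p + n ≤ L ∧ wordAt a n p = w

/-- The all-zero word `0^n`. -/
def zeroWord (t n : ℕ) [NeZero t] : Fin n → Fin t := fun _ => 0

/-- The least preference function induced by `P`:
`g(a_1,…,a_m) = (a_2,…,a_m, P_t(a_1,…,a_m))`. -/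
def leastPF {t m : ℕ} (ht : 0 < t) (P : (Fin m → Fin t) → Fin t → Fin t)
    (w : Fin m → Fin t) : Fin m → Fin t :=
  fun j => if h : (j : ℕ) + 1 = m then P w ⟨t - 1, Nat.sub_lt ht Nat.one_pos⟩
           else w ⟨(j : ℕ) + 1, by have := j.isLt; omega⟩

/-- `g` has no cycles of any length other than the self-loop at the all-zero word. -/
def OnlyZeroCycle {t m : ℕ} [NeZero t] (g : (Fin m → Fin t) → Fin m → Fin t) : Prop :=
  g (fun _ => 0) = (fun _ => 0) ∧
  ∀ (x : Fin m → Fin t) (l : ℕ), 0 < l → g^[l] x = x → x = fun _ => 0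

/-- Extend a finite sequence by zeros to a sequence indexed by `ℕ`. -/
def ext {t L : ℕ} [NeZero t] (S : Fin L → Fin t) : ℕ → Fin t :=
  fun i => if h : i < L then S ⟨i, h⟩ else 0

/-- Under the hypotheses of the main converse theorem, every word of the
form `b·0^{n-1}` with `b ∈ A` occurs in the sequence produced by Algorithm P. -/
theorem statement_7 (t s n : ℕ) [NeZero t] (ht : 2 ≤ t) (hs : 2 ≤ s) (hn : s ≤ n)
    (P : (Fin (s - 1) → Fin t) → Fin t → Fin t) (hP : IsPrefFun t (s - 1) P)
    (hg : OnlyZeroCycle (leastPF (show 0 < t by omega) P))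
    (a : ℕ → Fin t) (L : ℕ) (hGen : GenSeqFrom t (s - 1) n (zeroWord t n) P a L) :
    ∀ b : Fin t, ∃ p, p + n ≤ L ∧
      wordAt a n p = fun j : Fin n => if (j : ℕ) = 0 then b else 0 := by
  intro b
  have hn2 : 2 ≤ n := hs.trans hn
  have hL : n ≤ L := hGen.len_ge
  have hinit : ∀ j, j < n → a j = 0 := by
    intro j hj
    have := hGen.init ⟨j, hj⟩
    simpa [zeroWord] using this
  have hmax : ∀ c : Fin t, ∃ p, p + n ≤ L ∧ wordAt a n p = cand a n L c := hGen.maximal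
  choose q hqle hqw using hmax
  have hcand : ∀ (c : Fin t) (j : ℕ) (hj : j < n),
      a (q c + j) = if j + 1 = n then c else a (L - n + 1 + j) := by
    intro c j hj
    have h1 := congrFun (hqw c) ⟨j, hj⟩
    simp only [wordAt, cand] at h1
    have h2 : L - (n - 1) = L - n + 1 := by omega
    rw [h2] at h1
    exact h1
  have hlast : ∀ c : Fin t, a (q c + (n - 1)) = c := by
    intro c
    have := hcand c (n - 1) (by omega)
    rwa [if_pos (by omega)] at this
  have hprev : ∀ (c : Fin t) (j : ℕ), j + 1 < n → a (q c + j) = a (L - n + 1 + j) := by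
    intro c j hj
    have := hcand c j (by omega)
    rwa [if_neg (by omega)] at this
  have hqinj : ∀ c c' : Fin t, q c = q c' → c = c' := by
    intro c c' h
    have h1 := hlast c
    have h2 := hlast c'
    rw [h] at h1
    rw [h1] at h2
    exact h2
  -- Step 1: the last n-1 symbols are zero
  have hz : ∀ k, L - n < k → k < L → a k = 0 := by
    by_contra hcon
    push_neg at hcon
    obtain ⟨k, hk1, hk2, hk3⟩ := hcon
    set j₀ : ℕ := k - (L - n + 1) with hj₀
    have hkeq : k = L - n + 1 + j₀ := by omega
    have hj₀n : j₀ + 1 < n := by omega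
    have hq1 : ∀ c : Fin t, 1 ≤ q c := by
      intro c
      by_contra hq0
      have hq0' : q c = 0 := by omega
      have := hprev c j₀ hj₀n
      rw [hq0'] at this
      simp only [Nat.zero_add] at this
      rw [hinit j₀ (by omega)] at this
      rw [hkeq] at hk3
      exact hk3 this.symm
    have hGinj : Function.Injective (fun c : Fin t => a (q c - 1)) := by
      intro c c' hG
      simp only at hG
      have hw : wordAt a n (q c - 1) = wordAt a n (q c' - 1) := by
        funext j
        simp only [wordAt]
        rcases Nat.eq_zero_or_pos (j : ℕ) with hj0 | hj0
        · simpa [hj0] using hG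
        · have e1 : q c - 1 + (j : ℕ) = q c + ((j : ℕ) - 1) := by
            have := hq1 c; omega
          have e2 : q c' - 1 + (j : ℕ) = q c' + ((j : ℕ) - 1) := by
            have := hq1 c'; omega
          have hjn : ((j : ℕ) - 1) + 1 < n := by have := j.isLt; omega
          rw [e1, e2, hprev c _ hjn, hprev c' _ hjn]
      have := hGen.inj _ _ (by have := hqle c; have := hq1 c; omega)
        (by have := hqle c'; have := hq1 c'; omega) hw
      have : q c = q c' := by have := hq1 c; have := hq1 c'; omega
      exact hqinj _ _ this
    have hGsurj := Finite.injective_iff_surjective.mp hGinj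
    obtain ⟨c, hc⟩ := hGsurj (a (L - n))
    simp only at hc
    have hw : wordAt a n (q c - 1) = wordAt a n (L - n) := by
      funext j
      simp only [wordAt]
      rcases Nat.eq_zero_or_pos (j : ℕ) with hj0 | hj0
      · simpa [hj0] using hc
      · have e1 : q c - 1 + (j : ℕ) = q c + ((j : ℕ) - 1) := by
          have := hq1 c; omega
        have e2 : L - n + (j : ℕ) = L - n + 1 + ((j : ℕ) - 1) := by omega
        have hjn : ((j : ℕ) - 1) + 1 < n := by have := j.isLt; omega
        rw [e1, e2, hprev c _ hjn]
    have heq := hGen.inj _ _ (by have := hqle c; have := hq1 c; omega)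
      (by omega) hw
    have : q c = L - n + 1 := by have := hq1 c; omega
    have := hqle c
    omega
  -- Step 2: all words b·0^{n-1} occur
  have hq1' : ∀ c : Fin t, c ≠ 0 → 1 ≤ q c := by
    intro c hc
    by_contra hq0
    have hq0' : q c = 0 := by omega
    have := hlast c
    rw [hq0'] at this
    simp only [Nat.zero_add] at this
    rw [hinit (n - 1) (by omega)] at this
    exact hc this.symm
  have hsuffix : ∀ (c : Fin t) (j : ℕ), j + 1 < n → a (q c + j) = 0 := by
    intro c j hj
    rw [hprev c j hj]
    exact hz _ (by omega) (by omega)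
  set h : Fin t → ℕ := fun c => if c = 0 then L - n else q c - 1 with hdef
  have hhle : ∀ c, h c + n ≤ L := by
    intro c
    by_cases hc : c = 0
    · simp only [hdef, if_pos hc]; omega
    · simp only [hdef, if_neg hc]
      have := hqle c; have := hq1' c hc; omega
  have hword : ∀ c, wordAt a n (h c) =
      fun j : Fin n => if (j : ℕ) = 0 then a (h c) else 0 := by
    intro c
    funext j
    simp only [wordAt]
    rcases Nat.eq_zero_or_pos (j : ℕ) with hj0 | hj0
    · simp [hj0]
    · rw [if_neg (by omega)]
      by_cases hc : c = 0
      · simp only [hdef, if_pos hc]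
        exact hz _ (by omega) (by have := j.isLt; omega)
      · simp only [hdef, if_neg hc]
        have e1 : q c - 1 + (j : ℕ) = q c + ((j : ℕ) - 1) := by
          have := hq1' c hc; omega
        rw [e1]
        exact hsuffix c _ (by have := j.isLt; omega)
  have hG2inj : Function.Injective (fun c : Fin t => a (h c)) := by
    intro c c' hG
    simp only at hG
    have hw : wordAt a n (h c) = wordAt a n (h c') := by
      rw [hword c, hword c', hG]
    have hhc := hGen.inj _ _ (hhle c) (hhle c') hw
    by_cases hc : c = 0 <;> by_cases hc' : c' = 0
    · rw [hc, hc']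
    · exfalso
      simp only [hdef, if_pos hc, if_neg hc'] at hhc
      have := hqle c'; have := hq1' c' hc'; omega
    · exfalso
      simp only [hdef, if_neg hc, if_pos hc'] at hhc
      have := hqle c; have := hq1' c hc; omega
    · simp only [hdef, if_neg hc, if_neg hc'] at hhc
      have : q c = q c' := by have := hq1' c hc; have := hq1' c' hc'; omega
      exact hqinj _ _ this
  obtain ⟨c, hc⟩ := Finite.injective_iff_surjective.mp hG2inj b
  simp only at hc
  refine ⟨h c, hhle c, ?_⟩
  rw [hword c, hc]
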